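/- arXiv:2103.09761 — 3 statements merged into one kernel-verified Lean document; each statement's English description precedes it below -/
import Mathlib

section
/- Let X be a compound Poisson process with jump rate RT whose jumps are exponential with parameter T, with R ≥ 1/2. Then for any δ, t, A > 0, P(|X(s) − As| < δ for all s ≤ t) ≤ exp(−tT(√R − √A)² + δ|1 − √(R/A)|·T). -/
/-!
Only the constraint at the final time `s = t` is needed. Let `S n = E 0 + ⋯ + E (n-1)` be the
arrival times. On `{N(t) = n} = {S n ≤ t < S (n+1)}` the process equals `J 0 + ⋯ + J (n-1)`, which
is independent of that event. Since `S n` has the `Gamma(n, RT)` law, `N(t)` is Poisson with mean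
`RTt`, so `E[e^{qX(t)}] = exp(RTt (T/(T-q) - 1))` for `q < T`. Markov's inequality for `e^{qX(t)}`
at the tilt `q = T(1 - √(R/A))` gives the bound.
-/

open MeasureTheory ProbabilityTheory Real

noncomputable def cppX {Ω : Type*} (E J : ℕ → Ω → ℝ) (s : ℝ) (ω : Ω) : ℝ :=
  ∑' i : ℕ, if (∑ k ∈ Finset.range (i + 1), E k ω) ≤ s then J i ω else 0

open Set Finset Function
open scoped ENNReal Nat

section Exponential

lemma lintegral_exp_mul_mul_expMeasure (r : ℝ) {f : ℝ → ℝ≥0∞} (hf : Measurable f) :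
    ∫⁻ x, ENNReal.ofReal (exp (r * x)) * f x ∂expMeasure r
      = ENNReal.ofReal r * ∫⁻ x in Ici 0, f x := by
  change ∫⁻ x, _ ∂volume.withDensity (exponentialPDF r) = _
  rw [lintegral_withDensity_eq_lintegral_mul _
      (show Measurable (exponentialPDF r) from (measurable_exponentialPDFReal r).ennreal_ofReal)
      (by fun_prop), ← lintegral_const_mul _ hf, ← lintegral_indicator measurableSet_Ici]
  refine lintegral_congr fun x => ?_
  by_cases hx : 0 ≤ x
  · rw [indicator_of_mem (Set.mem_Ici.2 hx), Pi.mul_apply, exponentialPDF_of_nonneg hx,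
      ← mul_assoc, ← ENNReal.ofReal_mul' (exp_pos _).le, mul_assoc, ← exp_add, neg_add_cancel,
      exp_zero, mul_one]
  · rw [indicator_of_notMem (by simpa using hx), Pi.mul_apply,
      exponentialPDF_of_neg (not_le.1 hx), zero_mul]

lemma lintegral_exp_mul_expMeasure {r q : ℝ} (hq : q < r) :
    ∫⁻ x, ENNReal.ofReal (exp (q * x)) ∂expMeasure r = ENNReal.ofReal (r / (r - q)) := by
  have hqr : q - r < 0 := sub_neg.2 hq
  have hsplit : ∀ x, ENNReal.ofReal (exp (q * x))
      = ENNReal.ofReal (exp (r * x)) * ENNReal.ofReal (exp ((q - r) * x)) := fun x => by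
    rw [← ENNReal.ofReal_mul (exp_pos _).le, ← exp_add]
    ring_nf
  simp_rw [hsplit]
  rw [lintegral_exp_mul_mul_expMeasure r (by fun_prop), setLIntegral_congr Ioi_ae_eq_Ici.symm,
    ← ofReal_integral_eq_lintegral_ofReal (integrableOn_exp_mul_Ioi hqr 0)
      (ae_of_all _ fun _ => (exp_pos _).le),
    integral_exp_mul_Ioi hqr, mul_zero, exp_zero, ← ENNReal.ofReal_mul' (by
      rw [neg_div, ← div_neg, neg_sub]; exact div_nonneg zero_le_one (by linarith)),
    ← neg_sub r q, neg_div_neg_eq, mul_one_div]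

lemma expMeasure_Ioi {r a : ℝ} (hr : 0 < r) (ha : 0 ≤ a) :
    expMeasure r (Ioi a) = ENNReal.ofReal (exp (-(r * a))) := by
  have := isProbabilityMeasure_expMeasure hr
  rw [← compl_Iic, prob_compl_eq_one_sub measurableSet_Iic, ← ofReal_cdf, cdf_expMeasure_eq hr,
    if_pos ha, ← ENNReal.ofReal_one, ← ENNReal.ofReal_sub _
      (sub_nonneg.2 (exp_le_one_iff.2 (neg_nonpos.2 (mul_nonneg hr.le ha)))), sub_sub_cancel]

lemma ae_nonneg_expMeasure {r : ℝ} (hr : 0 < r) : ∀ᵐ x ∂expMeasure r, 0 ≤ x := by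
  have := isProbabilityMeasure_expMeasure hr
  rw [ae_iff]
  simp only [not_le]
  refine measure_mono_null (fun x (hx : x < 0) => Set.mem_Iic.2 hx.le) ?_
  rw [← ofReal_cdf, cdf_expMeasure_eq hr, if_pos le_rfl, mul_zero, neg_zero, exp_zero, sub_self,
    ENNReal.ofReal_zero]

end Exponential

lemma lintegral_Ici_ite_pow_div_factorial {r : ℝ} (hr : 0 ≤ r) (n : ℕ) (c : ℝ) :
    ENNReal.ofReal r * ∫⁻ y in Ici 0,
        (if 0 ≤ c - y then ENNReal.ofReal ((r * (c - y)) ^ n / n !) else 0)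
      = if 0 ≤ c then ENNReal.ofReal ((r * c) ^ (n + 1) / (n + 1)!) else 0 := by
  by_cases hc : 0 ≤ c
  · have hite : (fun y : ℝ => if 0 ≤ c - y then ENNReal.ofReal ((r * (c - y)) ^ n / n !) else 0)
        = (Iic c).indicator fun y => ENNReal.ofReal ((r * (c - y)) ^ n / n !) := by
      ext y
      simp [indicator_apply, sub_nonneg]
    have hnonneg : ∀ y ∈ Icc 0 c, 0 ≤ (r * (c - y)) ^ n / n ! := fun y hy =>
      div_nonneg (pow_nonneg (mul_nonneg hr (sub_nonneg.2 hy.2)) n) (Nat.cast_nonneg _)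
    rw [if_pos hc, hite, lintegral_indicator measurableSet_Iic,
      Measure.restrict_restrict measurableSet_Iic, Iic_inter_Ici,
      ← ofReal_integral_eq_lintegral_ofReal (by fun_prop : Continuous fun y : ℝ =>
        (r * (c - y)) ^ n / n !).integrableOn_Icc
        ((ae_restrict_iff' measurableSet_Icc).2 (ae_of_all _ hnonneg)),
      ← ENNReal.ofReal_mul hr, integral_Icc_eq_integral_Ioc, ← intervalIntegral.integral_of_le hc]
    congr 1
    simp only [mul_pow, mul_div_assoc]
    rw [intervalIntegral.integral_const_mul, intervalIntegral.integral_div,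
      intervalIntegral.integral_comp_sub_left (fun x => x ^ n) c, integral_pow,
      Nat.factorial_succ]
    push_cast
    field_simp
    ring
  · rw [if_neg hc, setLIntegral_congr_fun measurableSet_Ici fun y (hy : 0 ≤ y) =>
      if_neg (by linarith), lintegral_zero, mul_zero]

lemma hasSum_poisson_mul_pow (x m : ℝ) :
    HasSum (fun n : ℕ => exp (-x) * x ^ n / n ! * m ^ n) (exp (x * (m - 1))) := by
  have h := (NormedSpace.expSeries_div_hasSum_exp (x * m)).mul_left (exp (-x))
  rw [← exp_eq_exp_ℝ, ← exp_add] at h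
  rw [show x * (m - 1) = -x + x * m by ring]
  have hterm : (fun n : ℕ => exp (-x) * x ^ n / n ! * m ^ n)
      = fun n : ℕ => exp (-x) * ((x * m) ^ n / n !) := by
    ext n
    rw [mul_pow]
    ring
  rwa [hterm]

section Independence

variable {Ω : Type*} [MeasurableSpace Ω] {μ : Measure Ω}

lemma ProbabilityTheory.iIndepFun.indepFun_sumElim {ι κ β : Type*} [MeasurableSpace β]
    {f : ι → Ω → β} {g : κ → Ω → β} (hf : ∀ i, Measurable (f i)) (hg : ∀ j, Measurable (g j))
    (h : iIndepFun (Sum.elim f g) μ) : IndepFun (fun ω i => f i ω) (fun ω j => g j ω) μ := by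
  have hle : ∀ k, MeasurableSpace.comap (Sum.elim f g k) ‹_› ≤ ‹MeasurableSpace Ω› := by
    rintro (i | j)
    exacts [(hf i).comap_le, (hg j).comap_le]
  have := indep_iSup_of_disjoint hle h isCompl_range_inl_range_inr.disjoint
  simp only [iSup_range, Sum.elim_inl, Sum.elim_inr] at this
  change Indep (MeasurableSpace.comap _ MeasurableSpace.pi)
    (MeasurableSpace.comap _ MeasurableSpace.pi) μ
  simpa only [MeasurableSpace.pi, MeasurableSpace.comap_iSup, MeasurableSpace.comap_comp,
    Function.comp_def] using this

lemma ProbabilityTheory.IndepFun.setLIntegral_preimage {α β : Type*} [MeasurableSpace α]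
    [MeasurableSpace β] {X : Ω → α} {Y : Ω → β} (hXY : IndepFun X Y μ) (hX : Measurable X)
    (hY : Measurable Y) {s : Set α} (hs : MeasurableSet s) {g : β → ℝ≥0∞} (hg : Measurable g) :
    ∫⁻ ω in X ⁻¹' s, g (Y ω) ∂μ = μ (X ⁻¹' s) * ∫⁻ ω, g (Y ω) ∂μ := by
  have hprod := lintegral_mul_eq_lintegral_mul_lintegral_of_indepFun''
    ((measurable_one.indicator hs).comp hX).aemeasurable (hg.comp hY).aemeasurable
    (hXY.comp (measurable_one.indicator hs) hg)
  calc ∫⁻ ω in X ⁻¹' s, g (Y ω) ∂μ = ∫⁻ ω, (s.indicator 1 ∘ X) ω * (g ∘ Y) ω ∂μ := by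
        rw [← lintegral_indicator (hX hs)]
        congr 1
        ext ω
        by_cases h : X ω ∈ s <;> simp [h]
    _ = μ (X ⁻¹' s) * ∫⁻ ω, g (Y ω) ∂μ := by
        rw [hprod, ← lintegral_indicator_one (hX hs)]
        rfl

end Independence

section SumsOfExponentials

variable {Ω : Type*} [MeasurableSpace Ω] {μ : Measure Ω} {r : ℝ} {E : ℕ → Ω → ℝ}

/-- The law of `E 0 + ⋯ + E (n-1)` is `Gamma(n, r)`, tested against `x ↦ e^{rx} 1_{x ≤ c}`. -/
lemma setLIntegral_exp_mul_map_sum_range [IsProbabilityMeasure μ] (hr : 0 ≤ r)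
    (hEm : ∀ i, Measurable (E i)) (hind : iIndepFun E μ)
    (hlaw : ∀ i, μ.map (E i) = expMeasure r) (n : ℕ) (c : ℝ) :
    ∫⁻ x in Iic c, ENNReal.ofReal (exp (r * x)) ∂μ.map (∑ k ∈ range n, E k)
      = if 0 ≤ c then ENNReal.ofReal ((r * c) ^ n / n !) else 0 := by
  have hg : Measurable fun z => ENNReal.ofReal (exp (r * z)) := by fun_prop
  induction n generalizing c with
  | zero =>
    rw [sum_range_zero, show (0 : Ω → ℝ) = fun _ => 0 from rfl, Measure.map_const,
      ← lintegral_indicator measurableSet_Iic, measure_univ, one_smul, lintegral_dirac]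
    by_cases hc : 0 ≤ c <;> simp [hc]
  | succ n ih =>
    have hmap : μ.map (∑ k ∈ range (n + 1), E k)
        = expMeasure r ∗ μ.map (∑ k ∈ range n, E k) := by
      rw [sum_range_succ_comm, ← hlaw n]
      exact (hind.indepFun_finsetSum_of_notMem hEm notMem_range_self).symm.map_add_eq_map_conv_map
        (hEm n) (by rw [Finset.sum_fn]; fun_prop)
    have hshift : ∀ y x, (Iic c).indicator (fun z => ENNReal.ofReal (exp (r * z))) (y + x)
        = ENNReal.ofReal (exp (r * y))
          * (Iic (c - y)).indicator (fun z => ENNReal.ofReal (exp (r * z))) x := fun y x => by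
      by_cases h : y + x ≤ c
      · rw [indicator_of_mem (Set.mem_Iic.2 h), indicator_of_mem (Set.mem_Iic.2 (by linarith)),
          ← ENNReal.ofReal_mul (exp_pos _).le, ← exp_add, mul_add]
      · rw [indicator_of_notMem (by simpa using h), indicator_of_notMem (by simp; linarith),
          mul_zero]
    rw [← lintegral_indicator measurableSet_Iic, hmap,
      Measure.lintegral_conv (hg.indicator measurableSet_Iic)]
    simp_rw [hshift, lintegral_const_mul _ (hg.indicator measurableSet_Iic),
      lintegral_indicator measurableSet_Iic, ih]
    exact lintegral_Ici_ite_pow_div_factorial hr n c ▸ lintegral_exp_mul_mul_expMeasure r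
      (Measurable.ite (measurableSet_le measurable_const (by fun_prop)) (by fun_prop)
        measurable_const)

lemma lintegral_exp_mul_sum_range {T q : ℝ} (hT : 0 < T) (hq : q < T) {J : ℕ → Ω → ℝ}
    (hJm : ∀ i, Measurable (J i)) (hind : iIndepFun J μ)
    (hlaw : ∀ i, μ.map (J i) = expMeasure T) (n : ℕ) :
    ∫⁻ ω, ENNReal.ofReal (exp (q * ∑ k ∈ range n, J k ω)) ∂μ
      = ENNReal.ofReal ((T / (T - q)) ^ n) := by
  have hexp : Measurable fun x => ENNReal.ofReal (exp (q * x)) := by fun_prop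
  simp_rw [mul_sum, exp_sum, ENNReal.ofReal_prod_of_nonneg fun _ _ => (exp_pos _).le]
  rw [lintegral_prod_eq_prod_lintegral_of_indepFun _
    (fun k ω => ENNReal.ofReal (exp (q * J k ω))) (hind.comp _ fun _ => hexp)
    fun k => hexp.comp (hJm k)]
  simp_rw [← lintegral_map hexp (hJm _), hlaw, lintegral_exp_mul_expMeasure hq, prod_const,
    card_range]
  exact (ENNReal.ofReal_pow (div_nonneg hT.le (sub_pos.2 hq).le) n).symm

end SumsOfExponentials

/-- The event `N(t) = n`, read off the sequence of inter-arrival times. -/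
def arrivalsEq (t : ℝ) (n : ℕ) : Set (ℕ → ℝ) :=
  {e | ∑ k ∈ range n, e k ≤ t ∧ t < ∑ k ∈ range (n + 1), e k}

lemma measurableSet_arrivalsEq (t : ℝ) (n : ℕ) : MeasurableSet (arrivalsEq t n) := by
  rw [arrivalsEq, ofPred_and]
  exact (measurableSet_le (by fun_prop) measurable_const).inter
    (measurableSet_lt measurable_const (by fun_prop))

section ArrivalsEq

variable {t : ℝ} {n : ℕ} {e : ℕ → ℝ}

lemma sum_range_succ_le_iff_of_mem_arrivalsEq (he : ∀ i, 0 ≤ e i) (h : e ∈ arrivalsEq t n)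
    (i : ℕ) : ∑ k ∈ range (i + 1), e k ≤ t ↔ i < n := by
  have hmono : Monotone fun m => ∑ k ∈ range m, e k := fun a b hab =>
    sum_le_sum_of_subset_of_nonneg (range_subset_range.2 hab) fun k _ _ => he k
  refine ⟨fun hi => ?_, fun hi => (hmono hi).trans h.1⟩
  by_contra hni
  exact (h.2.trans_le (hmono (by omega))).not_ge hi

lemma eq_of_mem_arrivalsEq {m : ℕ} (he : ∀ i, 0 ≤ e i) (hm : e ∈ arrivalsEq t m)
    (hn : e ∈ arrivalsEq t n) : m = n :=
  eq_of_forall_lt_iff fun i =>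
    (sum_range_succ_le_iff_of_mem_arrivalsEq he hm i).symm.trans
      (sum_range_succ_le_iff_of_mem_arrivalsEq he hn i)

lemma hasSum_ite_of_mem_arrivalsEq (he : ∀ i, 0 ≤ e i) (h : e ∈ arrivalsEq t n) (j : ℕ → ℝ) :
    HasSum (fun i => if ∑ k ∈ range (i + 1), e k ≤ t then j i else 0) (∑ k ∈ range n, j k) := by
  simp_rw [sum_range_succ_le_iff_of_mem_arrivalsEq he h, ← Finset.mem_range]
  have : HasSum (fun i => if i ∈ range n then j i else 0)
      (∑ i ∈ range n, if i ∈ range n then j i else 0) :=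
    hasSum_sum_of_ne_finset_zero fun i hi => if_neg hi
  rwa [sum_congr rfl fun i hi => if_pos hi] at this

end ArrivalsEq

lemma cppX_eq_sum_of_mem_arrivalsEq {Ω : Type*} {E J : ℕ → Ω → ℝ} {t : ℝ} {n : ℕ} {ω : Ω}
    (hE : ∀ i, 0 ≤ E i ω) (hω : (fun i => E i ω) ∈ arrivalsEq t n) :
    cppX E J t ω = ∑ k ∈ range n, J k ω :=
  (hasSum_ite_of_mem_arrivalsEq hE hω _).tsum_eq

section Arrivals

variable {Ω : Type*} [MeasurableSpace Ω] {μ : Measure Ω} {r : ℝ} {E : ℕ → Ω → ℝ}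

lemma measure_arrivalsEq [IsProbabilityMeasure μ] (hr : 0 < r) {t : ℝ} (ht : 0 ≤ t)
    (hEm : ∀ i, Measurable (E i)) (hind : iIndepFun E μ)
    (hlaw : ∀ i, μ.map (E i) = expMeasure r) (n : ℕ) :
    μ ((fun ω i => E i ω) ⁻¹' arrivalsEq t n)
      = ENNReal.ofReal (exp (-(r * t)) * (r * t) ^ n / n !) := by
  set S := ∑ k ∈ range n, E k
  have hS : Measurable S := by simp only [S, Finset.sum_fn]; fun_prop
  have := isProbabilityMeasure_expMeasure hr
  set B : Set (ℝ × ℝ) := {p | p.1 ≤ t ∧ t < p.1 + p.2}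
  have hB : MeasurableSet B :=
    (measurableSet_le measurable_fst measurable_const).inter
      (measurableSet_lt measurable_const (measurable_fst.add measurable_snd))
  have hpre : (fun ω i => E i ω) ⁻¹' arrivalsEq t n = (fun ω => (S ω, E n ω)) ⁻¹' B := by
    ext ω
    simp [arrivalsEq, B, S, sum_range_succ, Finset.sum_apply]
  have hsection : ∀ x, expMeasure r (Prod.mk x ⁻¹' B)
      = (Iic t).indicator (fun x => ENNReal.ofReal (exp (-(r * t)))
          * ENNReal.ofReal (exp (r * x))) x := fun x => by
    by_cases hx : x ≤ t
    · have : Prod.mk x ⁻¹' B = Ioi (t - x) := by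
        ext y
        simp [B, hx, sub_lt_iff_lt_add']
      rw [this, expMeasure_Ioi hr (sub_nonneg.2 hx), indicator_of_mem (Set.mem_Iic.2 hx),
        ← ENNReal.ofReal_mul (exp_pos _).le, ← exp_add]
      ring_nf
    · have : Prod.mk x ⁻¹' B = ∅ := by
        ext y
        simp [B, hx]
      rw [this, measure_empty, indicator_of_notMem (by simpa using hx)]
  rw [hpre, ← Measure.map_apply (hS.prodMk (hEm n)) hB,
    (indepFun_iff_map_prod_eq_prod_map_map hS.aemeasurable (hEm n).aemeasurable).1
      (hind.indepFun_finsetSum_of_notMem hEm notMem_range_self), hlaw n,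
    Measure.prod_apply hB]
  simp_rw [hsection]
  rw [lintegral_indicator measurableSet_Iic, lintegral_const_mul _ (by fun_prop),
    setLIntegral_exp_mul_map_sum_range hr.le hEm hind hlaw, if_pos ht,
    ← ENNReal.ofReal_mul (exp_pos _).le, mul_div_assoc]

end Arrivals

/-- Data of `cppX` that is measurable, with nonnegative inter-arrival times everywhere rather
than only almost surely. -/
structure IsCompoundPoissonData {Ω : Type*} [MeasurableSpace Ω] (μ : Measure Ω) (r T : ℝ)
    (E J : ℕ → Ω → ℝ) : Prop where
  measurable_arrival : ∀ i, Measurable (E i)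
  measurable_jump : ∀ i, Measurable (J i)
  arrival_nonneg : ∀ i ω, 0 ≤ E i ω
  iIndep : iIndepFun (Sum.elim E J) μ
  map_arrival : ∀ i, μ.map (E i) = expMeasure r
  map_jump : ∀ i, μ.map (J i) = expMeasure T

namespace IsCompoundPoissonData

variable {Ω : Type*} [MeasurableSpace Ω] {μ : Measure Ω} {r T t : ℝ} {E J : ℕ → Ω → ℝ}

lemma measurable_arrivals (h : IsCompoundPoissonData μ r T E J) :
    Measurable fun ω i => E i ω :=
  measurable_pi_lambda _ h.measurable_arrival

lemma measurable_jumps (h : IsCompoundPoissonData μ r T E J) :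
    Measurable fun ω i => J i ω :=
  measurable_pi_lambda _ h.measurable_jump

lemma indepFun_arrivals_jumps (h : IsCompoundPoissonData μ r T E J) :
    IndepFun (fun ω i => E i ω) (fun ω i => J i ω) μ :=
  h.iIndep.indepFun_sumElim h.measurable_arrival h.measurable_jump

lemma iIndepFun_arrival (h : IsCompoundPoissonData μ r T E J) : iIndepFun E μ :=
  h.iIndep.precomp (g := Sum.inl) Sum.inl_injective

lemma iIndepFun_jump (h : IsCompoundPoissonData μ r T E J) : iIndepFun J μ :=
  h.iIndep.precomp (g := Sum.inr) Sum.inr_injective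

lemma pairwise_disjoint_preimage_arrivalsEq (h : IsCompoundPoissonData μ r T E J) (t : ℝ) :
    Pairwise (Disjoint on fun n => (fun ω i => E i ω) ⁻¹' arrivalsEq t n) :=
  fun _ _ hmn => Set.disjoint_left.2 fun ω hm hn =>
    hmn (eq_of_mem_arrivalsEq (fun i => h.arrival_nonneg i ω) hm hn)

/-- No explosion: the disjoint events `N(t) = n` have Poisson probabilities summing to `1`. -/
lemma ae_exists_mem_arrivalsEq [IsProbabilityMeasure μ] (h : IsCompoundPoissonData μ r T E J)
    (hr : 0 < r) (ht : 0 ≤ t) : ∀ᵐ ω ∂μ, ∃ n, (fun i => E i ω) ∈ arrivalsEq t n := by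
  have hA := fun n => h.measurable_arrivals (measurableSet_arrivalsEq t n)
  have hpoisson := hasSum_poisson_mul_pow (r * t) 1
  simp only [one_pow, mul_one, sub_self, mul_zero, exp_zero] at hpoisson
  have hfull : μ (⋃ n, (fun ω i => E i ω) ⁻¹' arrivalsEq t n) = μ univ := by
    rw [measure_univ, measure_iUnion (h.pairwise_disjoint_preimage_arrivalsEq t) hA]
    simp_rw [measure_arrivalsEq hr ht h.measurable_arrival h.iIndepFun_arrival
      h.map_arrival]
    rw [← ENNReal.ofReal_tsum_of_nonneg (fun n => by positivity) hpoisson.summable,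
      hpoisson.tsum_eq, ENNReal.ofReal_one]
  filter_upwards [(ae_mem_iff_measure_eq (MeasurableSet.iUnion hA).nullMeasurableSet).2 hfull]
    with ω hω
  simpa only [Set.mem_iUnion, Set.mem_preimage] using hω

lemma aemeasurable_cppX [IsProbabilityMeasure μ] (h : IsCompoundPoissonData μ r T E J)
    (hr : 0 < r) (ht : 0 ≤ t) : AEMeasurable (cppX E J t) μ := by
  refine aemeasurable_of_tendsto_metrizable_ae' (fun m => Measurable.aemeasurable
    (f := fun ω => ∑ i ∈ range m, if ∑ k ∈ range (i + 1), E k ω ≤ t then J i ω else 0)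
    (Finset.measurable_sum _ fun i _ => Measurable.ite
      (measurableSet_le (Finset.measurable_sum _ fun k _ => h.measurable_arrival k)
        measurable_const) (h.measurable_jump i) measurable_const)) ?_
  filter_upwards [h.ae_exists_mem_arrivalsEq hr ht] with ω ⟨n, hn⟩
  exact (hasSum_ite_of_mem_arrivalsEq (fun i => h.arrival_nonneg i ω) hn _).summable.hasSum
    |>.tendsto_sum_nat

theorem lintegral_exp_mul_cppX [IsProbabilityMeasure μ] (h : IsCompoundPoissonData μ r T E J)
    (hr : 0 < r) (hT : 0 < T) {q : ℝ} (hq : q < T) (ht : 0 ≤ t) :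
    ∫⁻ ω, ENNReal.ofReal (exp (q * cppX E J t ω)) ∂μ
      = ENNReal.ofReal (exp (r * t * (T / (T - q) - 1))) := by
  set A : ℕ → Set Ω := fun n => (fun ω i => E i ω) ⁻¹' arrivalsEq t n
  have hA : ∀ n, MeasurableSet (A n) := fun n =>
    h.measurable_arrivals (measurableSet_arrivalsEq t n)
  have hcover : μ.restrict (⋃ n, A n) = μ := Measure.restrict_eq_self_of_ae_mem <| by
    filter_upwards [h.ae_exists_mem_arrivalsEq hr ht] with ω ⟨n, hn⟩
    exact Set.mem_iUnion.2 ⟨n, hn⟩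
  have hpoisson := hasSum_poisson_mul_pow (r * t) (T / (T - q))
  calc ∫⁻ ω, ENNReal.ofReal (exp (q * cppX E J t ω)) ∂μ
      = ∑' n, ∫⁻ ω in A n, ENNReal.ofReal (exp (q * cppX E J t ω)) ∂μ := by
        rw [← lintegral_iUnion hA (h.pairwise_disjoint_preimage_arrivalsEq t), hcover]
    _ = ∑' n, ∫⁻ ω in A n, ENNReal.ofReal (exp (q * ∑ k ∈ range n, J k ω)) ∂μ :=
        tsum_congr fun n => setLIntegral_congr_fun (hA n) fun ω hω => by
          rw [cppX_eq_sum_of_mem_arrivalsEq (fun i => h.arrival_nonneg i ω) hω]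
    _ = ∑' n, μ (A n) * ∫⁻ ω, ENNReal.ofReal (exp (q * ∑ k ∈ range n, J k ω)) ∂μ :=
        tsum_congr fun n => h.indepFun_arrivals_jumps.setLIntegral_preimage
          h.measurable_arrivals h.measurable_jumps (measurableSet_arrivalsEq t n)
          (by fun_prop : Measurable fun v : ℕ → ℝ =>
            ENNReal.ofReal (exp (q * ∑ k ∈ range n, v k)))
    _ = ∑' n, ENNReal.ofReal (exp (-(r * t)) * (r * t) ^ n / n ! * (T / (T - q)) ^ n) :=
        tsum_congr fun n => by
          rw [measure_arrivalsEq hr ht h.measurable_arrival h.iIndepFun_arrival h.map_arrival,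
            lintegral_exp_mul_sum_range hT hq h.measurable_jump h.iIndepFun_jump h.map_jump,
            ← ENNReal.ofReal_mul (by positivity)]
    _ = ENNReal.ofReal (exp (r * t * (T / (T - q) - 1))) := by
        rw [← ENNReal.ofReal_tsum_of_nonneg (fun n => by positivity) hpoisson.summable,
          hpoisson.tsum_eq]

end IsCompoundPoissonData

section Reduction

variable {Ω : Type*} [MeasurableSpace Ω] {μ : Measure Ω}

lemma exists_measurable_nonneg_ae_eq {f : Ω → ℝ} {r : ℝ} (hr : 0 < r)
    (hf : μ.map f = expMeasure r) : ∃ g, Measurable g ∧ (∀ ω, 0 ≤ g ω) ∧ f =ᵐ[μ] g := by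
  have hmeas : AEMeasurable f μ := .of_map_ne_zero <| by
    rw [hf]
    exact (isProbabilityMeasure_expMeasure hr).ne_zero
  refine ⟨fun ω => max (hmeas.mk f ω) 0, hmeas.measurable_mk.max measurable_const,
    fun ω => le_max_right _ _, ?_⟩
  filter_upwards [hmeas.ae_eq_mk, ae_of_ae_map hmeas (hf ▸ ae_nonneg_expMeasure hr)]
    with ω hmk hnonneg
  rw [← hmk, max_eq_left hnonneg]

lemma exists_isCompoundPoissonData_ae_eq {r T : ℝ} (hr : 0 < r) (hT : 0 < T)
    {E J : ℕ → Ω → ℝ} (hind : iIndepFun (Sum.elim E J) μ)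
    (hE : ∀ i, μ.map (E i) = expMeasure r) (hJ : ∀ i, μ.map (J i) = expMeasure T) :
    ∃ E' J', IsCompoundPoissonData μ r T E' J' ∧
      ∀ᵐ ω ∂μ, ∀ s, cppX E J s ω = cppX E' J' s ω := by
  choose E' hE'm hE'0 hEE' using fun i => exists_measurable_nonneg_ae_eq hr (hE i)
  choose J' hJ'm _ hJJ' using fun i => exists_measurable_nonneg_ae_eq hT (hJ i)
  refine ⟨E', J', ⟨hE'm, hJ'm, hE'0, hind.congr ?_, fun i => ?_, fun i => ?_⟩, ?_⟩
  · rintro (i | i)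
    exacts [hEE' i, hJJ' i]
  · rw [← hE i, Measure.map_congr (hEE' i)]
  · rw [← hJ i, Measure.map_congr (hJJ' i)]
  · filter_upwards [ae_all_iff.2 hEE', ae_all_iff.2 hJJ'] with ω hEω hJω s
    simp only [cppX, hEω, hJω]

lemma measure_abs_sub_lt_le_exp_mul_lintegral {f : Ω → ℝ} (hf : AEMeasurable f μ)
    (a δ q : ℝ) :
    μ {ω | |f ω - a| < δ}
      ≤ ENNReal.ofReal (exp (-(q * a - |q| * δ))) * ∫⁻ ω, ENNReal.ofReal (exp (q * f ω)) ∂μ := by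
  set c := q * a - |q| * δ
  have hsub : {ω | |f ω - a| < δ}
      ⊆ {ω | ENNReal.ofReal (exp c) ≤ ENNReal.ofReal (exp (q * f ω))} := fun ω hω => by
    have hdev : |q| * |f ω - a| ≤ |q| * δ := mul_le_mul_of_nonneg_left hω.le (abs_nonneg q)
    have := neg_abs_le (q * (f ω - a))
    rw [abs_mul] at this
    exact ENNReal.ofReal_le_ofReal (exp_le_exp.2 (by linarith))
  calc μ {ω | |f ω - a| < δ}
      ≤ μ {ω | ENNReal.ofReal (exp c) ≤ ENNReal.ofReal (exp (q * f ω))} := measure_mono hsub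
    _ ≤ (∫⁻ ω, ENNReal.ofReal (exp (q * f ω)) ∂μ) / ENNReal.ofReal (exp c) :=
        meas_ge_le_lintegral_div
          ((by fun_prop : Measurable fun x => ENNReal.ofReal (exp (q * x))).comp_aemeasurable hf)
          (ENNReal.ofReal_pos.2 (exp_pos c)).ne' ENNReal.ofReal_ne_top
    _ = _ := by
        rw [ENNReal.div_eq_inv_mul, ← ENNReal.ofReal_inv_of_pos (exp_pos c), ← exp_neg]

end Reduction

lemma chernoff_exponent_eq {R A T t δ : ℝ} (hR : 0 < R) (hA : 0 < A) (hT : 0 < T) :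
    -(T * (1 - √(R / A)) * (A * t) - |T * (1 - √(R / A))| * δ)
        + R * T * t * (T / (T - T * (1 - √(R / A))) - 1)
      = -(t * T * (√R - √A) ^ 2) + δ * |1 - √(R / A)| * T := by
  have hsR : 0 < √R := sqrt_pos.2 hR
  have hsA : 0 < √A := sqrt_pos.2 hA
  rw [sqrt_div hR.le, abs_mul, abs_of_pos hT,
    show T - T * (1 - √R / √A) = T * √R / √A by field_simp; ring]
  nth_rewrite 3 [← sq_sqrt hR.le]
  nth_rewrite 2 [← sq_sqrt hA.le]
  field_simp
  ring

theorem cpp_tube_upper_general {Ω : Type*} [MeasurableSpace Ω] (μ : Measure Ω) [IsProbabilityMeasure μ]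
    (R T : ℝ) (hR : (1:ℝ)/2 ≤ R) (hT : 0 < T) (E J : ℕ → Ω → ℝ)
    (hindep : iIndepFun
      (Sum.elim E J) μ)
    (hE : ∀ i, μ.map (E i) = expMeasure (R * T))
    (hJ : ∀ i, μ.map (J i) = expMeasure T)
    (δ t A : ℝ) (ht : 0 < t) (hA : 0 < A) :
    μ {ω | ∀ s ∈ Set.Icc (0:ℝ) t, |cppX E J s ω - A * s| < δ}
      ≤ ENNReal.ofReal
          (Real.exp (-(t * T * (Real.sqrt R - Real.sqrt A) ^ 2)
            + δ * |1 - Real.sqrt (R / A)| * T)) := by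
  have hR0 : 0 < R := by linarith
  obtain ⟨E', J', h, hae⟩ := exists_isCompoundPoissonData_ae_eq (mul_pos hR0 hT) hT hindep hE hJ
  -- the tilt under which the process has drift `A`
  set q := T * (1 - √(R / A))
  have hq : q < T := by
    have := sqrt_pos.2 (div_pos hR0 hA)
    simp only [q]
    nlinarith
  calc μ {ω | ∀ s ∈ Set.Icc (0:ℝ) t, |cppX E J s ω - A * s| < δ}
      ≤ μ {ω | |cppX E' J' t ω - A * t| < δ} :=
        measure_mono_ae <| hae.mono fun ω hω hs =>
          (hω t ▸ hs t ⟨ht.le, le_rfl⟩ : |cppX E' J' t ω - A * t| < δ)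
    _ ≤ ENNReal.ofReal (exp (-(q * (A * t) - |q| * δ)))
          * ∫⁻ ω, ENNReal.ofReal (exp (q * cppX E' J' t ω)) ∂μ :=
        measure_abs_sub_lt_le_exp_mul_lintegral (h.aemeasurable_cppX (mul_pos hR0 hT) ht.le) _ _ _
    _ = _ := by
        rw [h.lintegral_exp_mul_cppX (mul_pos hR0 hT) hT hq ht.le,
          ← ENNReal.ofReal_mul (exp_pos _).le, ← exp_add, chernoff_exponent_eq hR0 hA hT]

/-- Upper bound for a compound Poisson process with jump rate `RT` (`R ≥ 1/2`) and `Exp(T)`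
jumps staying in a tube around the line `s ↦ As`:
`P(|X(s) − As| < δ ∀ s ≤ t) ≤ exp(−tT(√R − √A)² + δ|1 − √(R/A)|T)`. -/
theorem cpp_tube_upper {Ω : Type*} [MeasurableSpace Ω] (μ : Measure Ω) [IsProbabilityMeasure μ]
    (R T : ℝ) (hR : (1:ℝ)/2 ≤ R) (hT : 0 < T) (E J : ℕ → Ω → ℝ)
    (hindep : iIndepFun
      (Sum.elim E J) μ)
    (hE : ∀ i, μ.map (E i) = expMeasure (R * T))
    (hJ : ∀ i, μ.map (J i) = expMeasure T)
    (δ t A : ℝ) (hδ : 0 < δ) (ht : 0 < t) (hA : 0 < A) :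
    μ {ω | ∀ s ∈ Set.Icc (0:ℝ) t, |cppX E J s ω - A * s| < δ}
      ≤ ENNReal.ofReal
          (Real.exp (-(t * T * (Real.sqrt R - Real.sqrt A) ^ 2)
            + δ * |1 - Real.sqrt (R / A)| * T)) :=
  cpp_tube_upper_general μ R T hR hT E J hindep hE hJ δ t A ht hA
end

section
/- Under the same self-centering assumptions (Δ_{j−1}·E[2D_{j−1}−1|𝒢_{j−1}] ≤ 0, increments (2D_{j−1}−1)E_{j−1} with E_{j−1} ~ Exp(1) independent of D_{j−1} and 𝒢_{j−1}), one has E[Δ_j⁴] ≤ 12j(j+1) for all j ≥ 0. -/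
/-!
Write `S = 2D - 1`, so `S² = 1`. Expanding `(Δ + S E)ⁿ` binomially and using that `E` is
independent of `(Δ, S)` with `E[Eᵏ] = k!`, one step of the walk gives
`E[Δ'²] = E[Δ²] + 2 E[ΔS] + 2` and
`E[Δ'⁴] = E[Δ⁴] + 4 E[Δ³S] + 12 E[Δ²] + 24 E[ΔS] + 24`.
Both odd mixed moments are nonpositive: pulling `Δᵏ` out of the conditional expectation,
`Δᵏ E[S | 𝒢] = Δᵏ⁻¹ (Δ E[S | 𝒢]) ≤ 0` for odd `k`. Hence `E[Δ_j²] ≤ 2j`, and then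
`E[Δ_{j+1}⁴] ≤ 12j(j+1) + 24j + 24 = 12(j+1)(j+2)`.
-/

open MeasureTheory ProbabilityTheory Real Set
open scoped ENNReal Nat

section ExpMoments

variable {r : ℝ}

lemma exponentialPDFReal_smul_eq_indicator (hr : 0 < r) (f : ℝ → ℝ) :
    (fun x => (exponentialPDFReal r x).toNNReal • f x)
      = (Ici 0).indicator (fun x => r * exp (-(r * x)) * f x) := by
  ext x
  by_cases hx : 0 ≤ x
  · simp [exponentialPDFReal, gammaPDFReal, hx, NNReal.smul_def,
      Real.coe_toNNReal _ (by positivity : 0 ≤ r * exp (-(r * x)))]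
  · simp [exponentialPDFReal, gammaPDFReal, hx]

lemma expMeasure_eq_withDensity (r : ℝ) :
    expMeasure r = volume.withDensity fun x => ((exponentialPDFReal r x).toNNReal : ℝ≥0∞) :=
  rfl

lemma memLp_id_expMeasure (hr : 0 < r) (n : ℕ) : MemLp id n (expMeasure r) := by
  rcases n.eq_zero_or_pos with rfl | hn
  · simpa using memLp_zero_iff_aestronglyMeasurable.mpr aestronglyMeasurable_id
  rw [← integrable_norm_rpow_iff aestronglyMeasurable_id (by exact_mod_cast hn.ne') (by simp),
    expMeasure_eq_withDensity, integrable_withDensity_iff_integrable_smul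
      (measurable_exponentialPDFReal r).real_toNNReal,
    exponentialPDFReal_smul_eq_indicator hr, integrable_indicator_iff measurableSet_Ici,
    integrableOn_Ici_iff_integrableOn_Ioi]
  refine IntegrableOn.congr_fun ((integrableOn_rpow_mul_exp_neg_mul_rpow (s := n) (p := 1)
    (by linarith [n.cast_nonneg (α := ℝ)]) one_pos hr).const_mul r)
    (fun x hx => ?_) measurableSet_Ioi
  simp only [ENNReal.toReal_natCast, rpow_natCast, rpow_one, neg_mul, id_eq, norm_eq_abs,
    abs_of_pos (mem_Ioi.mp hx)]
  ring

lemma integral_pow_expMeasure (hr : 0 < r) (n : ℕ) :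
    ∫ x, x ^ n ∂expMeasure r = n ! / r ^ n := by
  rw [expMeasure_eq_withDensity, integral_withDensity_eq_integral_smul
      (measurable_exponentialPDFReal r).real_toNNReal,
    exponentialPDFReal_smul_eq_indicator hr, integral_indicator measurableSet_Ici,
    integral_Ici_eq_integral_Ioi]
  have hGamma := integral_rpow_mul_exp_neg_mul_Ioi (a := n + 1) (by positivity) hr
  simp only [add_sub_cancel_right, Real.Gamma_nat_eq_factorial, rpow_natCast] at hGamma
  rw [← Nat.cast_add_one, rpow_natCast] at hGamma
  calc ∫ x in Ioi 0, r * exp (-(r * x)) * x ^ n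
      = r * ∫ x in Ioi 0, x ^ n * exp (-(r * x)) := by
        rw [← integral_const_mul]; congr with x; ring
    _ = n ! / r ^ n := by
        rw [hGamma, div_pow, one_pow, pow_succ]; field_simp

end ExpMoments

lemma MeasureTheory.MemLp.integrable_pow {Ω : Type*} {m0 : MeasurableSpace Ω} {μ : Measure Ω}
    [IsFiniteMeasure μ] {f : Ω → ℝ} {n : ℕ} (hf : MemLp f n μ) :
    Integrable (fun ω => f ω ^ n) μ :=
  hf.integrable_norm_pow'.mono' (hf.aestronglyMeasurable.pow n)
    (.of_forall fun ω => by simp [norm_pow])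

section Step

variable {Ω : Type*} {m m0 : MeasurableSpace Ω} {μ : Measure Ω} {r : ℝ} {X S Y Z : Ω → ℝ}

lemma ProbabilityTheory.HasLaw.memLp_expMeasure (hY : HasLaw Y (expMeasure r) μ) (hr : 0 < r)
    (n : ℕ) : MemLp Y n μ := by
  have h := memLp_id_expMeasure hr n
  rw [← hY.map_eq] at h
  exact (memLp_map_measure_iff aestronglyMeasurable_id hY.aemeasurable).mp h

lemma ProbabilityTheory.HasLaw.integral_pow_expMeasure (hY : HasLaw Y (expMeasure r) μ)
    (hr : 0 < r) (n : ℕ) : ∫ ω, Y ω ^ n ∂μ = n ! / r ^ n :=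
  (hY.integral_comp (f := fun x => x ^ n) (by fun_prop)).trans
    (_root_.integral_pow_expMeasure hr n)

lemma indepFun_pow_of_indep_comap (hind : Indep (MeasurableSpace.comap Y inferInstance) m μ)
    (hZ : Measurable[m] Z) (n : ℕ) : IndepFun Z (fun ω => Y ω ^ n) μ := by
  rw [IndepFun_iff_Indep]
  exact (indep_of_indep_of_le_right (indep_of_indep_of_le_left hind
    ((measurable_id.pow_const n).comp (comap_measurable Y)).comap_le) hZ.comap_le).symm

lemma integrable_pow_mul_pow_of_abs_le_one [IsFiniteMeasure μ] {k : ℕ} (hX : MemLp X k μ)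
    (hS : AEStronglyMeasurable S μ) (hS1 : ∀ ω, |S ω| ≤ 1) (l : ℕ) :
    Integrable (fun ω => X ω ^ k * S ω ^ l) μ :=
  hX.integrable_norm_pow'.mono' (hX.aestronglyMeasurable.pow k |>.mul (hS.pow l))
    (.of_forall fun ω => by
      simpa [abs_mul, abs_pow] using mul_le_of_le_one_right (pow_nonneg (abs_nonneg _) _)
        (pow_le_one₀ (abs_nonneg _) (hS1 ω)))

lemma memLp_add_mul_of_abs_le_one {p : ℝ≥0∞} (hX : MemLp X p μ) (hY : MemLp Y p μ)
    (hS : AEStronglyMeasurable S μ) (hS1 : ∀ ω, |S ω| ≤ 1) :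
    MemLp (fun ω => X ω + S ω * Y ω) p μ :=
  hX.add (hY.of_le (hS.mul hY.aestronglyMeasurable) (.of_forall fun ω => by
    simpa [abs_mul] using mul_le_of_le_one_left (abs_nonneg _) (hS1 ω)))

lemma integral_add_mul_pow_of_indep [IsFiniteMeasure μ] (hm : m ≤ m0)
    (hind : Indep (MeasurableSpace.comap Y inferInstance) m μ) (hXm : Measurable[m] X)
    (hSm : Measurable[m] S) (hS1 : ∀ ω, |S ω| ≤ 1) {n : ℕ} (hX : MemLp X n μ)
    (hY : MemLp Y n μ) :
    ∫ ω, (X ω + S ω * Y ω) ^ n ∂μ = ∑ k ∈ Finset.range (n + 1),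
      n.choose k * (∫ ω, X ω ^ k * S ω ^ (n - k) ∂μ) * ∫ ω, Y ω ^ (n - k) ∂μ := by
  have hXS : ∀ k ∈ Finset.range (n + 1), Integrable (fun ω => X ω ^ k * S ω ^ (n - k)) μ :=
    fun k hk => integrable_pow_mul_pow_of_abs_le_one
      (hX.mono_exponent (by exact_mod_cast Finset.mem_range_succ_iff.mp hk))
      (hSm.mono hm le_rfl).aestronglyMeasurable hS1 _
  have hind' : ∀ k, IndepFun (fun ω => X ω ^ k * S ω ^ (n - k)) (fun ω => Y ω ^ (n - k)) μ :=
    fun k => indepFun_pow_of_indep_comap hind ((hXm.pow_const k).mul (hSm.pow_const _)) _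
  have hYk : ∀ k, Integrable (fun ω => Y ω ^ (n - k)) μ :=
    fun k => (hY.mono_exponent (by exact_mod_cast n.sub_le k)).integrable_pow
  calc ∫ ω, (X ω + S ω * Y ω) ^ n ∂μ
      = ∫ ω, ∑ k ∈ Finset.range (n + 1),
          n.choose k * (X ω ^ k * S ω ^ (n - k) * Y ω ^ (n - k)) ∂μ := by
        congr with ω
        rw [add_pow]
        exact Finset.sum_congr rfl fun k _ => by ring
    _ = _ := by
        have hint : ∀ k ∈ Finset.range (n + 1), Integrable
            (fun ω => n.choose k * (X ω ^ k * S ω ^ (n - k) * Y ω ^ (n - k))) μ :=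
          fun k hk => ((hind' k).integrable_mul (hXS k hk) (hYk k)).const_mul _
        rw [integral_finsetSum _ hint]
        refine Finset.sum_congr rfl fun k hk => ?_
        rw [integral_const_mul, (hind' k).integral_fun_mul_eq_mul_integral
          (hXS k hk).aestronglyMeasurable (hYk k).aestronglyMeasurable, mul_assoc]

lemma integral_odd_pow_mul_nonpos [IsFiniteMeasure μ] (hm : m ≤ m0) (hXm : Measurable[m] X)
    {k : ℕ} (hk : Odd k) (hS : Integrable S μ) (hXS : Integrable (fun ω => X ω ^ k * S ω) μ)
    (hsign : ∀ᵐ ω ∂μ, X ω * μ[S|m] ω ≤ 0) :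
    ∫ ω, X ω ^ k * S ω ∂μ ≤ 0 := by
  obtain ⟨i, rfl⟩ := hk
  have hpull : μ[fun ω => X ω ^ (2 * i + 1) * S ω | m] =ᵐ[μ]
      fun ω => X ω ^ (2 * i + 1) * μ[S|m] ω :=
    condExp_mul_of_stronglyMeasurable_left (hXm.pow_const _).stronglyMeasurable hXS hS
  rw [← integral_condExp hm, integral_congr_ae hpull]
  refine integral_nonpos_of_ae ?_
  filter_upwards [hsign] with ω hω
  calc X ω ^ (2 * i + 1) * μ[S|m] ω = (X ω ^ i) ^ 2 * (X ω * μ[S|m] ω) := by ring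
    _ ≤ 0 := mul_nonpos_of_nonneg_of_nonpos (sq_nonneg _) hω

end Step

structure SelfCenteringStep {Ω : Type*} {m0 : MeasurableSpace Ω} (μ : Measure Ω)
    (m : MeasurableSpace Ω) (r : ℝ) (X S Y : Ω → ℝ) : Prop where
  le : m ≤ m0
  measurable : Measurable[m] X
  measurable_sign : Measurable[m0] S
  sq_sign : ∀ ω, S ω ^ 2 = 1
  rate_pos : 0 < r
  hasLaw : HasLaw Y (expMeasure r) μ
  indep : Indep (MeasurableSpace.comap Y inferInstance)
    (m ⊔ MeasurableSpace.comap S inferInstance) μ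
  drift_nonpos : ∀ᵐ ω ∂μ, X ω * μ[S|m] ω ≤ 0

namespace SelfCenteringStep

variable {Ω : Type*} {m m0 : MeasurableSpace Ω} {μ : Measure Ω} {r : ℝ} {X S Y : Ω → ℝ}

lemma abs_sign_le_one (h : SelfCenteringStep μ m r X S Y) (ω : Ω) : |S ω| ≤ 1 :=
  (sq_le_one_iff_abs_le_one _).mp (h.sq_sign ω).le

lemma integral_add_mul_pow [IsFiniteMeasure μ] (h : SelfCenteringStep μ m r X S Y) {n : ℕ}
    (hX : MemLp X n μ) :
    ∫ ω, (X ω + S ω * Y ω) ^ n ∂μ = ∑ k ∈ Finset.range (n + 1),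
      n.choose k * (∫ ω, X ω ^ k * S ω ^ (n - k) ∂μ) * ((n - k)! / r ^ (n - k)) := by
  rw [integral_add_mul_pow_of_indep (sup_le h.le h.measurable_sign.comap_le) h.indep
    (h.measurable.mono le_sup_left le_rfl) ((comap_measurable S).mono le_sup_right le_rfl)
    h.abs_sign_le_one hX (h.hasLaw.memLp_expMeasure h.rate_pos n)]
  simp_rw [h.hasLaw.integral_pow_expMeasure h.rate_pos]

lemma integral_pow_mul_sign_nonpos [IsFiniteMeasure μ] (h : SelfCenteringStep μ m r X S Y)
    {k : ℕ} (hk : Odd k) (hX : MemLp X k μ) :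
    ∫ ω, X ω ^ k * S ω ∂μ ≤ 0 := by
  have hS := h.measurable_sign.aestronglyMeasurable (μ := μ)
  refine integral_odd_pow_mul_nonpos h.le h.measurable hk ?_ ?_ h.drift_nonpos
  · exact (integrable_const 1).mono' hS (.of_forall h.abs_sign_le_one)
  · simpa using integrable_pow_mul_pow_of_abs_le_one hX hS h.abs_sign_le_one 1

lemma integral_sq_eq [IsProbabilityMeasure μ] (h : SelfCenteringStep μ m r X S Y)
    (hX : MemLp X 2 μ) :
    ∫ ω, (X ω + S ω * Y ω) ^ 2 ∂μ
      = ∫ ω, X ω ^ 2 ∂μ + 2 / r * ∫ ω, X ω * S ω ∂μ + 2 / r ^ 2 := by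
  rw [h.integral_add_mul_pow hX]
  simp only [Finset.sum_range_succ, Finset.sum_range_zero, h.sq_sign, pow_zero, pow_one, mul_one]
  norm_num [Nat.choose, Nat.factorial]
  ring

lemma integral_pow_four_eq [IsProbabilityMeasure μ] (h : SelfCenteringStep μ m r X S Y)
    (hX : MemLp X 4 μ) :
    ∫ ω, (X ω + S ω * Y ω) ^ 4 ∂μ
      = ∫ ω, X ω ^ 4 ∂μ + 4 / r * ∫ ω, X ω ^ 3 * S ω ∂μ + 12 / r ^ 2 * ∫ ω, X ω ^ 2 ∂μ
        + 24 / r ^ 3 * ∫ ω, X ω * S ω ∂μ + 24 / r ^ 4 := by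
  have hS3 (ω : Ω) : S ω ^ 3 = S ω := by rw [pow_succ, h.sq_sign, one_mul]
  have hS4 (ω : Ω) : S ω ^ 4 = 1 := by rw [show 4 = 2 * 2 from rfl, pow_mul, h.sq_sign, one_pow]
  rw [h.integral_add_mul_pow hX]
  simp only [Finset.sum_range_succ, Finset.sum_range_zero, h.sq_sign, hS3, hS4, pow_zero,
    pow_one, mul_one]
  norm_num [Nat.choose, Nat.factorial]
  ring

lemma integral_sq_le [IsProbabilityMeasure μ] (h : SelfCenteringStep μ m r X S Y)
    (hX : MemLp X 2 μ) :
    ∫ ω, (X ω + S ω * Y ω) ^ 2 ∂μ ≤ ∫ ω, X ω ^ 2 ∂μ + 2 / r ^ 2 := by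
  have h1 := h.integral_pow_mul_sign_nonpos odd_one (hX.mono_exponent (by norm_num))
  have hr := h.rate_pos
  simp only [pow_one] at h1
  rw [h.integral_sq_eq hX]
  linear_combination mul_nonpos_of_nonneg_of_nonpos (by positivity : (0 : ℝ) ≤ 2 / r) h1

lemma integral_pow_four_le [IsProbabilityMeasure μ] (h : SelfCenteringStep μ m r X S Y)
    (hX : MemLp X 4 μ) :
    ∫ ω, (X ω + S ω * Y ω) ^ 4 ∂μ
      ≤ ∫ ω, X ω ^ 4 ∂μ + 12 / r ^ 2 * ∫ ω, X ω ^ 2 ∂μ + 24 / r ^ 4 := by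
  have h1 := h.integral_pow_mul_sign_nonpos odd_one (hX.mono_exponent (by norm_num))
  have h3 := h.integral_pow_mul_sign_nonpos (by decide : Odd 3) (hX.mono_exponent (by norm_num))
  have hr := h.rate_pos
  simp only [pow_one] at h1
  rw [h.integral_pow_four_eq hX]
  linear_combination mul_nonpos_of_nonneg_of_nonpos (by positivity : (0 : ℝ) ≤ 4 / r) h3
    + mul_nonpos_of_nonneg_of_nonpos (by positivity : (0 : ℝ) ≤ 24 / r ^ 3) h1

end SelfCenteringStep

section Walk

variable {Ω : Type*} {m0 : MeasurableSpace Ω} {μ : Measure Ω} {m : ℕ → MeasurableSpace Ω}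
  {r : ℝ} {X S Y : ℕ → Ω → ℝ}

lemma memLp_walk (hstep : ∀ j, SelfCenteringStep μ (m j) r (X j) (S j) (Y j)) (h0 : X 0 = 0)
    (hsucc : ∀ j, X (j + 1) = fun ω => X j ω + S j ω * Y j ω) (j n : ℕ) :
    MemLp (X j) n μ := by
  induction j with
  | zero => simp [h0]
  | succ j ih =>
    rw [hsucc]
    exact memLp_add_mul_of_abs_le_one ih
      ((hstep j).hasLaw.memLp_expMeasure (hstep j).rate_pos n)
      (hstep j).measurable_sign.aestronglyMeasurable (hstep j).abs_sign_le_one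

variable [IsProbabilityMeasure μ]

lemma integral_sq_walk_le (hstep : ∀ j, SelfCenteringStep μ (m j) r (X j) (S j) (Y j))
    (h0 : X 0 = 0) (hsucc : ∀ j, X (j + 1) = fun ω => X j ω + S j ω * Y j ω) (j : ℕ) :
    ∫ ω, X j ω ^ 2 ∂μ ≤ 2 * j / r ^ 2 := by
  induction j with
  | zero => simp [h0]
  | succ j ih =>
    rw [hsucc]
    have := (hstep j).integral_sq_le (memLp_walk hstep h0 hsucc j 2)
    push_cast
    linear_combination this + ih

lemma integral_pow_four_walk_le (hstep : ∀ j, SelfCenteringStep μ (m j) r (X j) (S j) (Y j))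
    (h0 : X 0 = 0) (hsucc : ∀ j, X (j + 1) = fun ω => X j ω + S j ω * Y j ω) (j : ℕ) :
    ∫ ω, X j ω ^ 4 ∂μ ≤ 12 * j * (j + 1) / r ^ 4 := by
  have hr := (hstep 0).rate_pos
  induction j with
  | zero => simp [h0]
  | succ j ih =>
    rw [hsucc]
    have := (hstep j).integral_pow_four_le (memLp_walk hstep h0 hsucc j 4)
    have h2 := mul_le_mul_of_nonneg_left (integral_sq_walk_le hstep h0 hsucc j)
      (by positivity : (0 : ℝ) ≤ 12 / r ^ 2)
    push_cast
    linear_combination this + ih + h2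

end Walk

/-- Fourth moment bound for a self-centering random walk with exponential step sizes:
if `Δ_0 = 0`, `Δ_{j+1} = Δ_j + (2D_j − 1)E_j` with `D_j ∈ {0,1}`, `E_j ~ Exp(1)` independent
of the past and of `D_j`, and the drift always opposes `Δ_j`
(`Δ_j·E[2D_j − 1 | 𝒢_j] ≤ 0` a.s.), then `E[Δ_j⁴] ≤ 12j(j+1)` for all `j`. -/
theorem selfCentering_fourth_moment {Ω : Type*} {m0 : MeasurableSpace Ω} (μ : Measure Ω)
    [IsProbabilityMeasure μ] (𝒢 : Filtration ℕ m0)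
    (Δ D E : ℕ → Ω → ℝ)
    (hΔ0 : ∀ ω, Δ 0 ω = 0)
    (hrec : ∀ j ω, Δ (j + 1) ω = Δ j ω + (2 * D j ω - 1) * E j ω)
    (hD01 : ∀ j ω, D j ω = 0 ∨ D j ω = 1)
    (hΔadapted : ∀ j, Measurable[𝒢 j] (Δ j))
    (hDmeas : ∀ j, Measurable[𝒢 (j + 1)] (D j))
    (hEdist : ∀ j, μ.map (E j) = expMeasure 1)
    (hEindep : ∀ j, Indep (MeasurableSpace.comap (E j) (inferInstance : MeasurableSpace ℝ))
      (𝒢 j ⊔ MeasurableSpace.comap (D j) (inferInstance : MeasurableSpace ℝ)) μ)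
    (hsign : ∀ j, ∀ᵐ ω ∂μ, Δ j ω * (μ[(fun ω' => 2 * D j ω' - 1) | 𝒢 j]) ω ≤ 0) :
    ∀ j : ℕ, ∫ ω, (Δ j ω) ^ 4 ∂μ ≤ 12 * j * (j + 1) := by
  have step (j : ℕ) : SelfCenteringStep μ (𝒢 j) 1 (Δ j) (fun ω => 2 * D j ω - 1) (E j) :=
    { le := 𝒢.le j
      measurable := hΔadapted j
      measurable_sign := (((hDmeas j).mono (𝒢.le _) le_rfl).const_mul 2).sub_const 1
      sq_sign := fun ω => by rcases hD01 j ω with hD | hD <;> norm_num [hD]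
      rate_pos := one_pos
      hasLaw :=
        { aemeasurable := .of_map_ne_zero <| by
            simp [hEdist j, (isProbabilityMeasure_expMeasure one_pos).ne_zero]
          map_eq := hEdist j }
      indep := indep_of_indep_of_le_right (hEindep j) (sup_le_sup_left
        (((comap_measurable (D j)).const_mul 2).sub_const 1).comap_le _)
      drift_nonpos := hsign j }
  simpa using integral_pow_four_walk_le step (funext hΔ0) (fun j => funext (hrec j))
end

section
/- Let 0 ≤ a < b ≤ 1, f ∈ G_M², and let f_n ∈ PL_n² be defined by f_n(j/n) = f(j/n) for j = 0,…,n with linear interpolation. Then liminf_n ∫_a^b √(R*_X(f_n(s))·f'_{n,X}(s)) ds ≥ ∫_a^b √(R*_X(f(s))·f'_X(s)) ds. -/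
open Filter Topology

/-- A member of the space `E`: a non-decreasing càdlàg function on `[0,1]` with `f(0) = 0`,
extended to `ℝ` by constants. -/
def IsE (f : ℝ → ℝ) : Prop :=
  Monotone f ∧ f 0 = 0 ∧ (∀ x ≤ (0:ℝ), f x = 0) ∧ (∀ x, (1:ℝ) ≤ x → f x = f 1) ∧
    ∀ x, ContinuousWithinAt f (Set.Ici x) x

/-- The Lévy metric on `E`. -/
noncomputable def levyDist (f g : ℝ → ℝ) : ℝ :=
  sInf {r : ℝ | 0 < r ∧ ∀ x ∈ Set.Icc (-r) (1 + r), f (x - r) - r < g x ∧ g x < f (x + r) + r}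

/-- Product (max) Lévy metric on `E²`. -/
noncomputable def dE2 (f g : (ℝ → ℝ) × (ℝ → ℝ)) : ℝ :=
  max (levyDist f.1 g.1) (levyDist f.2 g.2)

/-- `f ∈ G_{M,T}`: `s/M − 2T^{−2/3} ≤ f(s) ≤ M(s + 2T^{−2/3})` for all `s ∈ [0,1]`. -/
def GoodMT (M T : ℝ) (f : ℝ → ℝ) : Prop :=
  ∀ s ∈ Set.Icc (0:ℝ) 1,
    s / M - 2 * T ^ (-(2:ℝ)/3) ≤ f s ∧ f s ≤ M * (s + 2 * T ^ (-(2:ℝ)/3))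

/-- `f ∈ G_M`: `s/M ≤ f(s) ≤ Ms` for all `s ∈ [0,1]`. -/
def Good (M : ℝ) (f : ℝ → ℝ) : Prop :=
  ∀ s ∈ Set.Icc (0:ℝ) 1, s / M ≤ f s ∧ f s ≤ M * s

/-- `f ∈ PL_n`: `f` is linear on each interval `[i/n, (i+1)/n]`. -/
def PLn (n : ℕ) (f : ℝ → ℝ) : Prop :=
  ∀ i : ℕ, i < n → ∀ s ∈ Set.Icc ((i:ℝ)/n) (((i:ℝ)+1)/n),
    f s = f ((i:ℝ)/n) + (s - (i:ℝ)/n) * ((n:ℝ) * (f (((i:ℝ)+1)/n) - f ((i:ℝ)/n)))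

/-- `P*(x,y)`: limiting splitting probability. -/
noncomputable def PstarR (x y : ℝ) : ℝ :=
  if x = 0 ∧ y = 0 then 1/2 else if y ≤ x then y / (2 * x) else 1 - x / (2 * y)

/-- `R*(x,y) = (x/y) ∨ (y/x)` (with `R*(0,0) = 1`). -/
noncomputable def RstarR (x y : ℝ) : ℝ :=
  if x = 0 ∧ y = 0 then 1 else max (x / y) (y / x)

/-- `R*_X = R*·P*` for `y > 0`, and `1/2` if `y = 0`. -/
noncomputable def RstarX (x y : ℝ) : ℝ :=
  if y = 0 then 1/2 else RstarR x y * PstarR x y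

/-!
Off the grid, `f_n` is affine on the cell `[u, v] = [⌊sn⌋/n, (⌊sn⌋+1)/n]` containing `s`, with
slope `(f(v) - f(u))/(v - u)`. At an irrational `s` where `f` is differentiable (almost every `s`,
`f` being monotone), these straddling difference quotients converge to `f'(s)`, and `f_n(s)`,
squeezed between `f(u)` and `f(v)`, converges to `f(s)`. Since `f ∈ G_M²` keeps `f(s)` away from
`0`, `R*_X` is continuous there, so the integrands converge almost everywhere, and Fatou's lemma
gives the inequality. Fatou's lemma for a real `liminf` needs the integrals to stay bounded:
interpolation preserves `f₂ ≤ M² f₁`, so `R*_X ≤ M²`, and by AM-GM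
`√(R*_X f'_{n,1}) ≤ (M² + f'_{n,1})/2`, whose integral is at most `(M² + f₁(1) - f₁(0))/2`.
-/

open Set MeasureTheory Asymptotics

theorem integral_le_liminf_integral_of_ae_tendsto {α : Type*} [MeasurableSpace α]
    {μ : Measure α} {F : ℕ → α → ℝ} {f : α → ℝ} {C : ℝ} (hF_int : ∀ n, Integrable (F n) μ)
    (hF_nonneg : ∀ n, 0 ≤ᵐ[μ] F n) (hF_le : ∀ n, ∫ x, F n x ∂μ ≤ C)
    (hlim : ∀ᵐ x ∂μ, Tendsto (fun n => F n x) atTop (𝓝 (f x))) :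
    ∫ x, f x ∂μ ≤ liminf (fun n => ∫ x, F n x ∂μ) atTop := by
  have hf_nonneg : 0 ≤ᵐ[μ] f := by
    filter_upwards [hlim, ae_all_iff.2 hF_nonneg] with x hx hx0 using ge_of_tendsto' hx hx0
  have hI_nonneg n : 0 ≤ ∫ x, F n x ∂μ := integral_nonneg_of_ae (hF_nonneg n)
  have hcobdd := (isBoundedUnder_of (f := atTop) ⟨C, hF_le⟩).isCoboundedUnder_ge
  have hfatou : ∫⁻ x, ENNReal.ofReal (f x) ∂μ
      ≤ liminf (fun n => ENNReal.ofReal (∫ x, F n x ∂μ)) atTop := calc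
    ∫⁻ x, ENNReal.ofReal (f x) ∂μ = ∫⁻ x, liminf (fun n => ENNReal.ofReal (F n x)) atTop ∂μ :=
      lintegral_congr_ae (hlim.mono fun x hx => (ENNReal.tendsto_ofReal hx).liminf_eq.symm)
    _ ≤ liminf (fun n => ∫⁻ x, ENNReal.ofReal (F n x) ∂μ) atTop :=
      lintegral_liminf_le' fun n => (hF_int n).1.aemeasurable.ennreal_ofReal
    _ = liminf (fun n => ENNReal.ofReal (∫ x, F n x ∂μ)) atTop := by
      simp_rw [ofReal_integral_eq_lintegral_ofReal (hF_int _) (hF_nonneg _)]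
  have hmap := ENNReal.ofReal_mono.map_liminf_of_continuousAt (F := atTop)
    (fun n => ∫ x, F n x ∂μ) ENNReal.continuous_ofReal.continuousAt
    hcobdd (isBoundedUnder_of ⟨0, hI_nonneg⟩)
  rw [integral_eq_lintegral_of_nonneg_ae hf_nonneg
    (aestronglyMeasurable_of_tendsto_ae atTop (fun n => (hF_int n).1) hlim),
    ← ENNReal.toReal_ofReal (le_liminf_of_le hcobdd (Eventually.of_forall hI_nonneg))]
  exact ENNReal.toReal_mono ENNReal.ofReal_ne_top (hfatou.trans_eq hmap.symm)

theorem HasDerivAt.tendsto_slope_of_straddle {ι : Type*} {l : Filter ι} {f : ℝ → ℝ}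
    {f' x : ℝ} (hf : HasDerivAt f f' x) {u v : ι → ℝ} (hu : Tendsto u l (𝓝 x))
    (hv : Tendsto v l (𝓝 x)) (huv : ∀ᶠ i in l, u i ≤ x ∧ x ≤ v i ∧ u i < v i) :
    Tendsto (fun i => slope f (u i) (v i)) l (𝓝 f') := by
  set φ : ℝ → ℝ := fun t => f t - f x - (t - x) * f'
  have hφ : φ =o[𝓝 x] fun t => t - x := by simpa [φ] using hf.isLittleO
  have hφ_comp (w : ι → ℝ) (hw : Tendsto w l (𝓝 x))
      (hwx : ∀ᶠ i in l, |w i - x| ≤ v i - u i) : (fun i => φ (w i)) =o[l] fun i => v i - u i :=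
    (hφ.comp_tendsto hw).trans_isBigO <| .of_bound 1 <| by
      filter_upwards [hwx, huv] with i hi hi'
      simpa [abs_of_pos (sub_pos.2 hi'.2.2)] using hi
  have hvx : ∀ᶠ i in l, |v i - x| ≤ v i - u i := huv.mono fun i hi => by
    rw [abs_of_nonneg (sub_nonneg.2 hi.2.1)]; linarith
  have hux : ∀ᶠ i in l, |u i - x| ≤ v i - u i := huv.mono fun i hi => by
    rw [abs_of_nonpos (sub_nonpos.2 hi.1)]; linarith
  rw [← tendsto_sub_nhds_zero_iff]
  refine ((hφ_comp v hv hvx).sub (hφ_comp u hu hux)).tendsto_div_nhds_zero.congr' ?_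
  filter_upwards [huv] with i hi
  rw [slope_def_field]
  field_simp [(sub_pos.2 hi.2.2).ne']
  ring

theorem Real.sqrt_mul_le_add_div_two {x y : ℝ} (hx : 0 ≤ x) (hy : 0 ≤ y) :
    √(x * y) ≤ (x + y) / 2 :=
  Real.sqrt_le_iff.2 ⟨by positivity, by nlinarith [sq_nonneg (x - y)]⟩

theorem Irrational.ne_natCast_div {s : ℝ} (h : Irrational s) (i n : ℕ) : s ≠ i / n := by
  simpa using h.ne_rat (i / n)

theorem floor_mul_lt_and_mem_Ico {n : ℕ} {s : ℝ} (hn : 0 < n) (hs : s ∈ Ico (0 : ℝ) 1) :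
    ⌊s * n⌋₊ < n ∧ s ∈ Ico (⌊s * n⌋₊ / n : ℝ) ((⌊s * n⌋₊ + 1) / n) := by
  have hn' : (0 : ℝ) < n := by exact_mod_cast hn
  have hsn : 0 ≤ s * n := by positivity [hs.1]
  refine ⟨(Nat.floor_lt hsn).2 ?_, (div_le_iff₀ hn').2 (Nat.floor_le hsn),
    (lt_div_iff₀ hn').2 (Nat.lt_floor_add_one _)⟩
  nlinarith [hs.2]

theorem RstarX_eq_of_pos {x y : ℝ} (hx : 0 < x) (hy : 0 < y) :
    RstarX x y = max (1 / 2) (y / x - 1 / 2) := by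
  rw [RstarX, RstarR, PstarR, if_neg hy.ne', if_neg (fun h => hy.ne' h.2),
    if_neg (fun h => hy.ne' h.2)]
  rcases le_or_gt y x with h | h
  · have hyx : y / x ≤ 1 := (div_le_one hx).2 h
    rw [if_pos h, max_eq_left ((div_le_div_iff₀ hx hy).2 (mul_self_le_mul_self hy.le h)),
      max_eq_left (by linarith)]
    field_simp
  · have hyx : 1 ≤ y / x := (one_le_div hx).2 h.le
    rw [if_neg (not_le.2 h),
      max_eq_right ((div_le_div_iff₀ hy hx).2 (mul_self_le_mul_self hx.le h.le)),
      max_eq_right (by linarith)]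
    field_simp

theorem continuousAt_RstarX {x y : ℝ} (hx : 0 < x) (hy : 0 < y) :
    ContinuousAt (fun p : ℝ × ℝ => RstarX p.1 p.2) (x, y) := by
  have hpos : ∀ᶠ p : ℝ × ℝ in 𝓝 (x, y), 0 < p.1 ∧ 0 < p.2 :=
    (continuousAt_fst.eventually (lt_mem_nhds hx)).and
      (continuousAt_snd.eventually (lt_mem_nhds hy))
  have hmax : ContinuousAt (fun p : ℝ × ℝ => max (1 / 2) (p.2 / p.1 - 1 / 2)) (x, y) := by
    fun_prop (disch := exact hx.ne')
  exact hmax.congr (hpos.mono fun p hp => (RstarX_eq_of_pos hp.1 hp.2).symm)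

theorem RstarX_mem_Icc {M x y : ℝ} (hM : 1 ≤ M) (hy : 0 ≤ y) (hxy : y ≤ M ^ 2 * x) :
    RstarX x y ∈ Icc (1 / 2) (M ^ 2) := by
  have hM2 : 1 ≤ M ^ 2 := one_le_pow₀ hM
  rcases hy.eq_or_lt with rfl | hy
  · rw [RstarX, if_pos rfl]; constructor <;> linarith
  have hx : 0 < x := pos_of_mul_pos_right (hy.trans_le hxy) (by positivity)
  rw [RstarX_eq_of_pos hx hy]
  have : y / x ≤ M ^ 2 := (div_le_iff₀ hx).2 hxy
  exact ⟨le_max_left _ _, max_le (by linarith) (by linarith)⟩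

theorem measurable_RstarX : Measurable fun p : ℝ × ℝ => RstarX p.1 p.2 := by
  have h00 : MeasurableSet {p : ℝ × ℝ | p.1 = 0 ∧ p.2 = 0} := by measurability
  refine Measurable.ite (measurableSet_eq_fun measurable_snd measurable_const) measurable_const
    (.mul (.ite h00 measurable_const (by fun_prop)) (.ite h00 measurable_const
      (.ite (measurableSet_le measurable_snd measurable_fst) (by fun_prop) (by fun_prop))))

section PiecewiseLinear

variable {n i : ℕ} {f g h : ℝ → ℝ} {s : ℝ}

theorem PLn.const_mul (hg : PLn n g) (c : ℝ) : PLn n fun x => c * g x := by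
  intro i hi s hs
  dsimp only
  rw [hg i hi s hs]
  ring

theorem PLn.monotoneOn_piece (hg : PLn n g) (hi : i < n)
    (hle : g (i / n) ≤ g ((i + 1) / n)) :
    MonotoneOn g (Icc (i / n) ((i + 1) / n)) := by
  intro x hx y hy hxy
  rw [hg i hi x hx, hg i hi y hy]
  have := sub_nonneg.2 hle
  gcongr

theorem PLn.monotoneOn (hn : 0 < n) (hg : PLn n g)
    (hgrid : ∀ i < n, g (i / n) ≤ g ((i + 1) / n)) : MonotoneOn g (Icc 0 1) := by
  have key : ∀ k ≤ n, MonotoneOn g (Icc 0 (k / n)) := by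
    intro k
    induction k with
    | zero => intro; simp
    | succ k ih =>
      intro hk
      have := (ih (by omega)).union_right (hg.monotoneOn_piece hk (hgrid k hk))
        (isGreatest_Icc (by positivity)) (isLeast_Icc (by gcongr; linarith))
      rwa [Icc_union_Icc_eq_Icc (by positivity) (by gcongr; linarith), ← Nat.cast_succ] at this
  simpa [hn.ne'] using key n le_rfl

theorem PLn.le_of_le_grid (hn : 0 < n) (hg : PLn n g) (hh : PLn n h)
    (hgrid : ∀ j ≤ n, g (j / n) ≤ h (j / n)) (hs : s ∈ Icc (0 : ℝ) 1) : g s ≤ h s := by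
  rcases hs.2.lt_or_eq with hs1 | rfl
  · obtain ⟨hi, hsi⟩ := floor_mul_lt_and_mem_Ico hn ⟨hs.1, hs1⟩
    set i := ⌊s * n⌋₊
    have hu := hgrid i hi.le
    have hv : g ((i + 1) / n) ≤ h ((i + 1) / n) := by exact_mod_cast hgrid (i + 1) hi
    have hn' : (0 : ℝ) < n := by exact_mod_cast hn
    -- with `t = (s - i/n) n ∈ [0, 1]`, both sides are `(1 - t) • _ (i/n) + t • _ ((i+1)/n)`
    have ht₀ : 0 ≤ (s - i / n) * n := by nlinarith [hsi.1]
    have ht₁ : (s - i / n) * n ≤ 1 := by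
      have := hsi.2.le
      rw [le_div_iff₀ hn'] at this
      rw [sub_mul, div_mul_cancel₀ _ hn'.ne']
      linarith
    rw [hg i hi s (Ico_subset_Icc_self hsi), hh i hi s (Ico_subset_Icc_self hsi)]
    nlinarith [mul_nonneg (sub_nonneg.2 ht₁) (sub_nonneg.2 hu),
      mul_nonneg ht₀ (sub_nonneg.2 hv)]
  · simpa [hn.ne'] using hgrid n le_rfl

theorem PLn.hasDerivAt (hg : PLn n g) (hi : i < n)
    (hs : s ∈ Ioo (i / n : ℝ) ((i + 1) / n)) :
    HasDerivAt g (n * (g ((i + 1) / n) - g (i / n))) s := by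
  set c := n * (g ((i + 1) / n) - g (i / n))
  have hd : HasDerivAt (fun t => g (i / n) + (t - i / n) * c) c s := by
    simpa using (((hasDerivAt_id s).sub_const (i / n : ℝ)).mul_const c).const_add (g (i / n))
  exact hd.congr_of_eventuallyEq <| Filter.eventually_of_mem (Ioo_mem_nhds hs.1 hs.2)
    fun t ht => hg i hi t (Ioo_subset_Icc_self ht)

end PiecewiseLinear

def PLInterp (n : ℕ) (f g : ℝ → ℝ) : Prop :=
  PLn n g ∧ ∀ j : ℕ, j ≤ n → g (j / n) = f (j / n)

section Interpolation

variable {M : ℝ} {n i : ℕ} {f f₁ f₂ g g₁ g₂ : ℝ → ℝ} {s x : ℝ}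

theorem PLInterp.eq_succ (hg : PLInterp n f g) (hi : i < n) :
    g ((i + 1) / n) = f ((i + 1) / n) := by
  exact_mod_cast hg.2 (i + 1) hi

theorem PLInterp.monotoneOn (hn : 0 < n) (hf : Monotone f) (hg : PLInterp n f g) :
    MonotoneOn g (Icc 0 1) :=
  hg.1.monotoneOn hn fun i hi => by
    rw [hg.2 i hi.le, hg.eq_succ hi]
    exact hf (by gcongr; linarith)

theorem PLInterp.nonneg (hn : 0 < n) (hf : Monotone f) (hf₀ : 0 ≤ f 0) (hg : PLInterp n f g)
    (hs : s ∈ Icc (0 : ℝ) 1) : 0 ≤ g s := by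
  have hg₀ : g 0 = f 0 := by simpa using hg.2 0 n.zero_le
  exact (hf₀.trans_eq hg₀.symm).trans <| hg.monotoneOn hn hf ⟨le_rfl, zero_le_one⟩ hs hs.1

theorem Good.le_sq_mul (hM : 0 < M) (h₁ : Good M f₁) (h₂ : Good M f₂)
    (hx : x ∈ Icc (0 : ℝ) 1) : f₂ x ≤ M ^ 2 * f₁ x :=
  calc f₂ x ≤ M * x := (h₂ x hx).2
    _ = M ^ 2 * (x / M) := by field_simp
    _ ≤ M ^ 2 * f₁ x := by gcongr; exact (h₁ x hx).1

theorem PLInterp.le_sq_mul (hn : 0 < n) (hM : 0 < M) (hG₁ : Good M f₁) (hG₂ : Good M f₂)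
    (h₁ : PLInterp n f₁ g₁) (h₂ : PLInterp n f₂ g₂) (hs : s ∈ Icc (0 : ℝ) 1) :
    g₂ s ≤ M ^ 2 * g₁ s := by
  refine h₂.1.le_of_le_grid hn (h₁.1.const_mul _) (fun j hj => ?_) hs
  rw [h₁.2 j hj, h₂.2 j hj]
  exact hG₁.le_sq_mul hM hG₂
    ⟨by positivity, div_le_one_of_le₀ (by exact_mod_cast hj) n.cast_nonneg⟩

theorem PLInterp.sqrt_RstarX_mul_deriv_le (hM : 1 < M) (hn : 0 < n) (hf₁ : Monotone f₁)
    (hf₂ : Monotone f₂) (hG₁ : Good M f₁) (hG₂ : Good M f₂) (h₁ : PLInterp n f₁ g₁)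
    (h₂ : PLInterp n f₂ g₂) (hs : s ∈ Ioo (0 : ℝ) 1) :
    √(RstarX (g₁ s) (g₂ s) * deriv g₁ s) ≤ (M ^ 2 + deriv g₁ s) / 2 := by
  have hs' := Ioo_subset_Icc_self hs
  have hf₂₀ : 0 ≤ f₂ 0 := by simpa using (hG₂ 0 ⟨le_rfl, zero_le_one⟩).1
  have hR := RstarX_mem_Icc hM.le (h₂.nonneg hn hf₂ hf₂₀ hs')
    (h₁.le_sq_mul hn (one_pos.trans hM) hG₁ hG₂ h₂ hs')
  have hd : 0 ≤ deriv g₁ s := by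
    rw [← derivWithin_of_mem_nhds (Icc_mem_nhds hs.1 hs.2)]
    exact (h₁.monotoneOn hn hf₁).derivWithin_nonneg
  calc √(RstarX (g₁ s) (g₂ s) * deriv g₁ s) ≤ (RstarX (g₁ s) (g₂ s) + deriv g₁ s) / 2 :=
        Real.sqrt_mul_le_add_div_two (by linarith [hR.1]) hd
    _ ≤ (M ^ 2 + deriv g₁ s) / 2 := by linarith [hR.2]

end Interpolation

section Integrals

variable {M a b : ℝ} {n : ℕ} {f f₁ f₂ g g₁ g₂ : ℝ → ℝ}

theorem PLInterp.integrableOn_deriv_and_setIntegral_le (hn : 0 < n) (hf : Monotone f)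
    (hg : PLInterp n f g) (ha : 0 ≤ a) (hab : a ≤ b) (hb : b ≤ 1) :
    IntegrableOn (deriv g) (Ioc a b) ∧ ∫ s in Ioc a b, deriv g s ≤ f 1 - f 0 := by
  have hmono := hg.monotoneOn hn hf
  have hmono_ab : MonotoneOn g (uIcc a b) := hmono.mono (uIcc_of_le hab ▸ Icc_subset_Icc ha hb)
  have h := hmono_ab.intervalIntegral_deriv_mem_uIcc
  rw [intervalIntegral.integral_of_le hab,
    uIcc_of_le (sub_nonneg.2 (hmono_ab left_mem_uIcc right_mem_uIcc hab))] at h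
  have hg₀ : g 0 = f 0 := by simpa using hg.2 0 n.zero_le
  have hg₁ : g 1 = f 1 := by simpa [hn.ne'] using hg.2 n le_rfl
  refine ⟨hmono_ab.intervalIntegrable_deriv.1, h.2.trans ?_⟩
  rw [← hg₀, ← hg₁]
  exact sub_le_sub (hmono ⟨ha.trans hab, hb⟩ ⟨zero_le_one, le_rfl⟩ hb)
    (hmono ⟨le_rfl, zero_le_one⟩ ⟨ha, hab.trans hb⟩ ha)

theorem PLInterp.ae_sqrt_RstarX_mul_deriv_le (hM : 1 < M) (hn : 0 < n) (hf₁ : Monotone f₁)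
    (hf₂ : Monotone f₂) (hG₁ : Good M f₁) (hG₂ : Good M f₂) (h₁ : PLInterp n f₁ g₁)
    (h₂ : PLInterp n f₂ g₂) (ha : 0 ≤ a) (hb : b ≤ 1) :
    ∀ᵐ s ∂volume.restrict (Ioc a b),
      √(RstarX (g₁ s) (g₂ s) * deriv g₁ s) ≤ (M ^ 2 + deriv g₁ s) / 2 := by
  filter_upwards [ae_restrict_mem measurableSet_Ioc,
    ae_restrict_of_ae (Measure.ae_ne volume 1)] with s hs hs₁
  exact h₁.sqrt_RstarX_mul_deriv_le hM hn hf₁ hf₂ hG₁ hG₂ h₂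
    ⟨ha.trans_lt hs.1, (hs.2.trans hb).lt_of_ne hs₁⟩

theorem PLInterp.integrableOn_and_setIntegral_sqrt_RstarX_mul_deriv_le (hM : 1 < M)
    (hn : 0 < n) (hf₁ : Monotone f₁) (hf₂ : Monotone f₂) (hG₁ : Good M f₁) (hG₂ : Good M f₂)
    (h₁ : PLInterp n f₁ g₁) (h₂ : PLInterp n f₂ g₂) (ha : 0 ≤ a) (hab : a ≤ b) (hb : b ≤ 1) :
    IntegrableOn (fun s => √(RstarX (g₁ s) (g₂ s) * deriv g₁ s)) (Ioc a b) ∧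
      ∫ s in Ioc a b, √(RstarX (g₁ s) (g₂ s) * deriv g₁ s) ≤ (M ^ 2 + (f₁ 1 - f₁ 0)) / 2 := by
  have hsub : Ioc a b ⊆ Icc 0 1 := fun s hs => ⟨ha.trans hs.1.le, hs.2.trans hb⟩
  have hm₁ := aemeasurable_restrict_of_monotoneOn (μ := volume) measurableSet_Ioc
    ((h₁.monotoneOn hn hf₁).mono hsub)
  have hm₂ := aemeasurable_restrict_of_monotoneOn (μ := volume) measurableSet_Ioc
    ((h₂.monotoneOn hn hf₂).mono hsub)
  obtain ⟨hd_int, hd_le⟩ := h₁.integrableOn_deriv_and_setIntegral_le hn hf₁ ha hab hb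
  have hconst : IntegrableOn (fun _ => M ^ 2) (Ioc a b) :=
    integrableOn_const measure_Ioc_lt_top.ne
  have hbound_int : IntegrableOn (fun s => (M ^ 2 + deriv g₁ s) / 2) (Ioc a b) :=
    (hconst.add hd_int).div_const 2
  have hae := h₁.ae_sqrt_RstarX_mul_deriv_le hM hn hf₁ hf₂ hG₁ hG₂ h₂ ha hb
  have hint : IntegrableOn (fun s => √(RstarX (g₁ s) (g₂ s) * deriv g₁ s)) (Ioc a b) :=
    hbound_int.mono' (Real.continuous_sqrt.measurable.comp_aemeasurable
      ((measurable_RstarX.comp_aemeasurable (hm₁.prodMk hm₂)).mul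
        (measurable_deriv g₁).aemeasurable)).aestronglyMeasurable
      (hae.mono fun s hs => by rwa [Real.norm_of_nonneg (Real.sqrt_nonneg _)])
  refine ⟨hint, (integral_mono_ae hint hbound_int hae).trans ?_⟩
  rw [integral_div, integral_add hconst hd_int, setIntegral_const, smul_eq_mul, measureReal_def,
    Real.volume_Ioc, ENNReal.toReal_ofReal (sub_nonneg.2 hab)]
  have : (b - a) * M ^ 2 ≤ M ^ 2 := by nlinarith [sq_nonneg M]
  linarith

end Integrals

section Convergence

variable {M a b s : ℝ} {f f₁ f₂ : ℝ → ℝ}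

theorem tendsto_PLInterp_of_differentiableAt {g : ℕ → ℝ → ℝ} (hf : Monotone f)
    (hg : ∀ n, 0 < n → PLInterp n f (g n)) (hs : s ∈ Ioo (0 : ℝ) 1) (hirr : Irrational s)
    (hd : DifferentiableAt ℝ f s) :
    Tendsto (fun n => g n s) atTop (𝓝 (f s)) ∧
      Tendsto (fun n => deriv (g n) s) atTop (𝓝 (deriv f s)) := by
  set u : ℕ → ℝ := fun n => ⌊s * n⌋₊ / n
  set v : ℕ → ℝ := fun n => (⌊s * n⌋₊ + 1) / n
  have hu : Tendsto u atTop (𝓝 s) :=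
    (tendsto_nat_floor_mul_div_atTop hs.1.le).comp tendsto_natCast_atTop_atTop
  have hvu (n : ℕ) : v n - u n = 1 / n := by simp only [u, v]; ring
  have hv : Tendsto v atTop (𝓝 s) := by
    have := hu.add tendsto_one_div_atTop_nhds_zero_nat
    rw [add_zero] at this
    exact this.congr fun n => by rw [← hvu n, add_sub_cancel]
  have hcell : ∀ᶠ n : ℕ in atTop, 0 < n ∧ ⌊s * n⌋₊ < n ∧ s ∈ Ioo (u n) (v n) ∧
      u n ∈ Icc (0 : ℝ) 1 ∧ v n ∈ Icc (0 : ℝ) 1 := by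
    filter_upwards [eventually_gt_atTop 0] with n hn
    obtain ⟨hi, hsi⟩ := floor_mul_lt_and_mem_Ico hn (Ioo_subset_Ico_self hs)
    refine ⟨hn, hi, ⟨hsi.1.lt_of_ne (hirr.ne_natCast_div _ _).symm, hsi.2⟩,
      ⟨by positivity, hsi.1.trans hs.2.le⟩, ⟨by positivity, ?_⟩⟩
    exact div_le_one_of_le₀ (by exact_mod_cast hi) n.cast_nonneg
  refine ⟨tendsto_of_tendsto_of_tendsto_of_le_of_le' (hd.continuousAt.tendsto.comp hu)
    (hd.continuousAt.tendsto.comp hv) ?_ ?_, ?_⟩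
  · filter_upwards [hcell] with n h
    obtain ⟨hn, hi, hsi, hu₀, -⟩ := h
    rw [Function.comp_apply, ← (hg n hn).2 _ hi.le]
    exact (hg n hn).monotoneOn hn hf hu₀ (Ioo_subset_Icc_self hs) hsi.1.le
  · filter_upwards [hcell] with n h
    obtain ⟨hn, hi, hsi, -, hv₁⟩ := h
    rw [Function.comp_apply, ← (hg n hn).eq_succ hi]
    exact (hg n hn).monotoneOn hn hf (Ioo_subset_Icc_self hs) hv₁ hsi.2.le
  · refine (hd.hasDerivAt.tendsto_slope_of_straddle hu hv ?_).congr' ?_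
    · filter_upwards [hcell] with n h
      obtain ⟨-, -, hsi, -⟩ := h
      exact ⟨hsi.1.le, hsi.2.le, hsi.1.trans hsi.2⟩
    · filter_upwards [hcell] with n h
      obtain ⟨hn, hi, hsi, -⟩ := h
      rw [((hg n hn).1.hasDerivAt hi hsi).deriv, (hg n hn).2 _ hi.le, (hg n hn).eq_succ hi,
        slope_def_field, hvu, div_div_eq_mul_div, div_one, mul_comm]

theorem ae_tendsto_sqrt_RstarX_mul_deriv {g₁ g₂ : ℕ → ℝ → ℝ} (hM : 0 < M)
    (hf₁ : Monotone f₁) (hf₂ : Monotone f₂) (hG₁ : Good M f₁) (hG₂ : Good M f₂)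
    (hg : ∀ n, 0 < n → PLInterp n f₁ (g₁ n) ∧ PLInterp n f₂ (g₂ n)) (ha : 0 ≤ a) (hb : b ≤ 1) :
    ∀ᵐ s ∂volume.restrict (Ioc a b),
      Tendsto (fun n => √(RstarX (g₁ n s) (g₂ n s) * deriv (g₁ n) s)) atTop
        (𝓝 (√(RstarX (f₁ s) (f₂ s) * deriv f₁ s))) := by
  -- irrational points avoid all the grid points `i/n`, in particular `1`
  have hirr : ∀ᵐ s ∂volume, Irrational s := (countable_range ((↑) : ℚ → ℝ)).ae_notMem volume
  filter_upwards [ae_restrict_mem measurableSet_Ioc, ae_restrict_of_ae hirr,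
    ae_restrict_of_ae hf₁.ae_differentiableAt, ae_restrict_of_ae hf₂.ae_differentiableAt]
    with s hs hs_irr hd₁ hd₂
  have hs' : s ∈ Ioo (0 : ℝ) 1 := ⟨ha.trans_lt hs.1, (hs.2.trans hb).lt_of_ne hs_irr.ne_one⟩
  obtain ⟨hlim₁, hlim_deriv⟩ :=
    tendsto_PLInterp_of_differentiableAt hf₁ (fun n hn => (hg n hn).1) hs' hs_irr hd₁
  obtain ⟨hlim₂, -⟩ :=
    tendsto_PLInterp_of_differentiableAt hf₂ (fun n hn => (hg n hn).2) hs' hs_irr hd₂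
  have hpos {f : ℝ → ℝ} (hG : Good M f) : 0 < f s :=
    (div_pos hs'.1 hM).trans_le (hG s (Ioo_subset_Icc_self hs')).1
  exact (Real.continuous_sqrt.tendsto _).comp
    (((continuousAt_RstarX (hpos hG₁) (hpos hG₂)).tendsto.comp
      (hlim₁.prodMk_nhds hlim₂)).mul hlim_deriv)

end Convergence

/-- Lower semicontinuity under piecewise-linear interpolation: if `f ∈ G_M²` and
`f_n ∈ PL_n²` interpolates `f` at the grid points `j/n`, then
`liminf ∫_a^b √(R*_X(f_n) f'_{n,X}) ≥ ∫_a^b √(R*_X(f) f'_X)`. -/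
theorem liminf_sqrt_cross_term (a b M : ℝ) (ha : 0 ≤ a) (hab : a < b) (hb : b ≤ 1)
    (hM : 1 < M) (f : (ℝ → ℝ) × (ℝ → ℝ)) (fn : ℕ → (ℝ → ℝ) × (ℝ → ℝ))
    (hf : IsE f.1 ∧ IsE f.2 ∧ Good M f.1 ∧ Good M f.2)
    (hinterp : ∀ n : ℕ, 1 ≤ n → PLn n (fn n).1 ∧ PLn n (fn n).2 ∧
      ∀ j : ℕ, j ≤ n → (fn n).1 ((j:ℝ)/n) = f.1 ((j:ℝ)/n) ∧
        (fn n).2 ((j:ℝ)/n) = f.2 ((j:ℝ)/n)) :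
    ∫ s in a..b, Real.sqrt (RstarX (f.1 s) (f.2 s) * deriv f.1 s)
      ≤ Filter.liminf
          (fun n => ∫ s in a..b,
            Real.sqrt (RstarX ((fn n).1 s) ((fn n).2 s) * deriv (fn n).1 s)) atTop := by
  obtain ⟨⟨hf₁, -⟩, ⟨hf₂, -⟩, hG₁, hG₂⟩ := hf
  have hI (n : ℕ) (hn : 0 < n) : PLInterp n f.1 (fn n).1 ∧ PLInterp n f.2 (fn n).2 :=
    have h := hinterp n hn
    ⟨⟨h.1, fun j hj => (h.2.2 j hj).1⟩, ⟨h.2.1, fun j hj => (h.2.2 j hj).2⟩⟩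
  have hbound (n : ℕ) :=
    (hI (n + 1) n.succ_pos).1.integrableOn_and_setIntegral_sqrt_RstarX_mul_deriv_le hM
      n.succ_pos hf₁ hf₂ hG₁ hG₂ (hI (n + 1) n.succ_pos).2 ha hab.le hb
  simp only [intervalIntegral.integral_of_le hab.le]
  rw [← liminf_nat_add _ 1]
  exact integral_le_liminf_integral_of_ae_tendsto (fun n => (hbound n).1)
    (fun n => ae_of_all _ fun s => Real.sqrt_nonneg _) (fun n => (hbound n).2)
    ((ae_tendsto_sqrt_RstarX_mul_deriv (one_pos.trans hM) hf₁ hf₂ hG₁ hG₂ hI ha hb).mono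
      fun s hs => hs.comp (tendsto_add_atTop_nat 1))
end
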